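/- arXiv:cs/0306017 — 2 statements merged into one kernel-verified Lean document; each statement's English description precedes it below -/
import Mathlib

section
/- For every countable ordinal α, T_P(M_α) =_α M_α, i.e., T_P(M_α) and M_α have the same sets of atoms with value T_β and the same sets of atoms with value F_β for all β ≤ α. -/
open Ordinal Set

noncomputable section
attribute [local instance] Classical.propDecidable

namespace IVS

/-- Countable ordinals: ordinals below `ω₁`. -/
abbrev Ord1 := {o : Ordinal.{0} // o < ω₁}

theorem zero_lt_omega1 : (0 : Ordinal) < ω₁ := omega_pos 1

theorem succ_lt_omega1 {o : Ordinal} (h : o < ω₁) : o + 1 < ω₁ := by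
  have := (Cardinal.isSuccLimit_omega 1).succ_lt h
  rwa [Order.succ_eq_add_one] at this

/-- zero as a countable ordinal -/
def O0 : Ord1 := ⟨0, zero_lt_omega1⟩

/-- successor on countable ordinals -/
def Ord1.succ (a : Ord1) : Ord1 := ⟨a.1 + 1, succ_lt_omega1 a.2⟩

/-- The truth domain `V`: `F_α < ⋯ < 0 < ⋯ < T_α` realized as a lexicographic sum. -/
abbrev TV := Ord1 ⊕ₗ (Unit ⊕ₗ Ord1ᵒᵈ)

/-- the false value `F_α` -/
def TV.F (a : Ord1) : TV := toLex (Sum.inl a)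
/-- the middle value `0` -/
def TV.Z : TV := toLex (Sum.inr (toLex (Sum.inl ())))
/-- the true value `T_α` -/
def TV.T (a : Ord1) : TV := toLex (Sum.inr (toLex (Sum.inr (OrderDual.toDual a))))

/-- the order of a truth value (`⊤` codes `+∞`, the order of `0`) -/
def ordOf (v : TV) : WithTop Ordinal :=
  match ofLex v with
  | .inl a => (a.1 : Ordinal)
  | .inr b =>
    match ofLex b with
    | .inl _ => ⊤
    | .inr a => ((OrderDual.ofDual a).1 : Ordinal)

/-- negation-as-failure: `¬F_α = T_{α+1}`, `¬T_α = F_{α+1}`, `¬0 = 0`. -/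
def negv (v : TV) : TV :=
  match ofLex v with
  | .inl a => TV.T a.succ
  | .inr b =>
    match ofLex b with
    | .inl _ => TV.Z
    | .inr a => TV.F (OrderDual.ofDual a).succ

/-- Literals of a propositional normal program (atoms are natural numbers). -/
inductive Lit where
  | pos (n : ℕ)
  | neg (n : ℕ)
  | tt
  | ff

/-- A normal program clause: a head atom and a body which is a conjunction of literals. -/
structure Clause where
  head : ℕ
  body : List Lit

/-- A (possibly infinite) propositional normal logic program. -/
abbrev Program := Set Clause

/-- Infinite-valued interpretations. -/
abbrev Interp := ℕ → TV

/-- the interpretation assigning `F₀` to every atom (denoted `∅` in the paper) -/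
def botI : Interp := fun _ => TV.F O0

def evalLit (I : Interp) : Lit → TV
  | .pos n => I n
  | .neg n => negv (I n)
  | .tt => TV.T O0
  | .ff => TV.F O0

/-- value of a body (conjunction evaluated by `min`; empty conjunction is `T₀`) -/
def evalBody (I : Interp) (b : List Lit) : TV :=
  (b.map (evalLit I)).foldr min (TV.T O0)

/-- least upper bound in `V` (well-defined by the lub-existence theorem) -/
def lub (S : Set TV) : TV := if h : ∃ v, IsLUB S v then h.choose else TV.Z

/-- the immediate consequence operator -/
def TP (P : Program) (I : Interp) : Interp :=
  fun p => lub {v | ∃ c ∈ P, c.head = p ∧ evalBody I c.body = v}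

/-- `I` is an (infinite-valued) model of `P` -/
def isModel (P : Program) (I : Interp) : Prop :=
  ∀ c ∈ P, evalBody I c.body ≤ I c.head

/-- the level set `I ∥ v` -/
def level (I : Interp) (v : TV) : Set ℕ := {p | I p = v}

/-- `I =_α J` -/
def eqA (α : Ord1) (I J : Interp) : Prop :=
  ∀ β ≤ α, level I (TV.T β) = level J (TV.T β) ∧ level I (TV.F β) = level J (TV.F β)

/-- `I ⊏_α J` -/
def sqltA (α : Ord1) (I J : Interp) : Prop :=
  (∀ β < α, eqA β I J) ∧
    ((level I (TV.T α) ⊂ level J (TV.T α) ∧ level J (TV.F α) ⊆ level I (TV.F α)) ∨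
     (level I (TV.T α) ⊆ level J (TV.T α) ∧ level J (TV.F α) ⊂ level I (TV.F α)))

/-- `I ⊑_α J` -/
def sqleA (α : Ord1) (I J : Interp) : Prop := eqA α I J ∨ sqltA α I J

/-- `I ⊏_∞ J` -/
def sqltInf (I J : Interp) : Prop := ∃ α : Ord1, sqltA α I J

/-- `I ⊑_∞ J` -/
def sqleInf (I J : Interp) : Prop := I = J ∨ sqltInf I J

/-- the sequence `T_P^n(I)` is an `α`-chain -/
def isChainA (P : Program) (α : Ord1) (I : Interp) : Prop :=
  ∀ n : ℕ, sqleA α ((TP P)^[n] I) ((TP P)^[n + 1] I)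

/-- the interpretation `T_{P,α}^ω(I)` -/
def TPomega (P : Program) (α : Ord1) (I : Interp) : Interp := fun p =>
  if ordOf (I p) < (α.1 : WithTop Ordinal) then I p
  else if ∃ n : ℕ, (TP P)^[n] I p = TV.T α then TV.T α
  else if ∀ n : ℕ, (TP P)^[n] I p = TV.F α then TV.F α
  else TV.F α.succ

/-- `⊔_{β<α} M_β` for a family defined below `α` -/
def sqcupI (α : Ord1) (f : ∀ β : Ordinal, β < α.1 → Interp) : Interp := fun p =>
  if h : ∃ β : Ordinal, ∃ hb : β < α.1, ordOf (f β hb p) = (β : WithTop Ordinal)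
  then f h.choose h.choose_spec.choose p
  else TV.F α

/-- the approximations `M_α` to the minimum model (junk values for `α ≥ ω₁`) -/
def MA (P : Program) (o : Ordinal) : Interp :=
  Ordinal.limitRecOn o
    (TPomega P O0 botI)
    (fun o' ih => if h : o' + 1 < ω₁ then TPomega P ⟨o' + 1, h⟩ ih else ih)
    (fun o' _ ih =>
      if h : o' < ω₁ then TPomega P ⟨o', h⟩ (sqcupI ⟨o', h⟩ ih) else botI)

/-- `M_α` for a countable ordinal `α` -/
def Mα (P : Program) (α : Ord1) : Interp := MA P α.1

/-- the defining property of the depth `δ` of a program -/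
def isDepth (P : Program) (δ : Ord1) : Prop :=
  (level (Mα P δ) (TV.T δ) = ∅ ∧ level (Mα P δ) (TV.F δ) = ∅) ∧
    ∀ β : Ord1, β < δ →
      (level (Mα P β) (TV.T β) ≠ ∅ ∨ level (Mα P β) (TV.F β) ≠ ∅)

/-- the depth of a program -/
def depth (P : Program) : Ord1 :=
  if h : ∃ δ : Ord1, isDepth P δ then h.choose else O0

/-- the minimum model `M_P` -/
def MP (P : Program) : Interp := fun p =>
  if ordOf (Mα P (depth P) p) < ((depth P).1 : WithTop Ordinal)
  then Mα P (depth P) p else TV.Z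

/-- the set of all infinite-valued models of `P` -/
def models (P : Program) : Set Interp := {I | isModel P I}

/-- `M ♯ α`: the part of `M` consisting of values of order `α` -/
def sharp (I : Interp) (α : Ord1) : Set (ℕ × TV) :=
  {pv | I pv.1 = pv.2 ∧ ordOf pv.2 = (α.1 : WithTop Ordinal)}

/-- `⨀^α S = ⋀^α S ∪ ⋁^α S` -/
def odot (α : Ord1) (S : Set Interp) : Set (ℕ × TV) :=
  {pv | (∃ p : ℕ, pv = (p, TV.T α) ∧ ∀ M ∈ S, M p = TV.T α) ∨
        (∃ p : ℕ, pv = (p, TV.F α) ∧ ∃ M ∈ S, M p = TV.F α)}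

/-- the sets `S_α` of the model intersection construction (junk for `α ≥ ω₁`) -/
def SA (P : Program) (o : Ordinal) : Set Interp :=
  Ordinal.limitRecOn o
    {M ∈ models P | sharp M O0 = odot O0 (models P)}
    (fun o' ih =>
      if h : o' + 1 < ω₁ then {M ∈ ih | sharp M ⟨o' + 1, h⟩ = odot ⟨o' + 1, h⟩ ih} else ih)
    (fun o' _ ih =>
      if h : o' < ω₁ then
        {M : Interp | M ∈ (⋂ (b : Ordinal) (hb : b < o'), ih b hb) ∧
          sharp M ⟨o', h⟩ = odot ⟨o', h⟩ (⋂ (b : Ordinal) (hb : b < o'), ih b hb)}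
      else ∅)


/-!
Write `x ⊑_α y` (`ApproxLE`) when `x` and `y` agree on values of order `< α`, `x = T_α` forces
`y = T_α`, and `y = F_α` forces `x = F_α`. Conjunction, negation (which raises orders by one) and
least upper bounds preserve `⊑_α`, so `T_P` is monotone for its pointwise extension.

At stage `α`, `M_α = T^ω_{P,α}(I)` where every atom of `I` is either fixed below `α` or `F_α`,
and `T_P(I) =_β I` for `β < α`. Then `I ⊑_α T_P(I)`, so the iterates `T_P^n(I)` form a
`⊑_α`-chain lying below `M_α`, and comparing `T_P(M_α)` with `T_P^{n+1}(I)` gives half of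
`T_P(M_α) =_α M_α`. For the other half, each literal of a clause body is eventually stable along
the iterates (in value, or in lying above `F_α`), and a body has finitely many literals.

The hypotheses on `I` come from induction on `α`: `I` is `M_{α-1}` at a successor and
`⊔_{β<α} M_β` at a limit, and in both cases `I =_β M_β` for all `β < α`.
-/

open Filter

/-! ### Truth values -/

@[elab_as_elim]
theorem TV.induction {motive : TV → Prop} (F : ∀ a, motive (TV.F a)) (Z : motive TV.Z)
    (T : ∀ a, motive (TV.T a)) (v : TV) : motive v := by
  rcases v with a | (u | a)
  exacts [F a, Z, T (OrderDual.ofDual a)]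

@[simp] theorem TV.F_lt_F {a b : Ord1} : TV.F a < TV.F b ↔ a < b := Sum.Lex.inl_lt_inl_iff
@[simp] theorem TV.F_le_F {a b : Ord1} : TV.F a ≤ TV.F b ↔ a ≤ b := Sum.Lex.inl_le_inl_iff
@[simp] theorem TV.T_lt_T {a b : Ord1} : TV.T a < TV.T b ↔ b < a := by
  simp only [TV.T, Sum.Lex.inr_lt_inr_iff, OrderDual.toDual_lt_toDual]
@[simp] theorem TV.T_le_T {a b : Ord1} : TV.T a ≤ TV.T b ↔ b ≤ a := by
  simp only [TV.T, Sum.Lex.inr_le_inr_iff, OrderDual.toDual_le_toDual]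
@[simp] theorem TV.F_lt_Z {a : Ord1} : TV.F a < TV.Z := Sum.Lex.inl_lt_inr _ _
@[simp] theorem TV.F_lt_T {a b : Ord1} : TV.F a < TV.T b := Sum.Lex.inl_lt_inr _ _
@[simp] theorem TV.Z_lt_T {a : Ord1} : TV.Z < TV.T a :=
  Sum.Lex.inr_lt_inr_iff.2 (Sum.Lex.inl_lt_inr _ _)

@[simp] theorem TV.F_inj {a b : Ord1} : TV.F a = TV.F b ↔ a = b := by
  simp only [le_antisymm_iff, TV.F_le_F]
@[simp] theorem TV.T_inj {a b : Ord1} : TV.T a = TV.T b ↔ a = b := by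
  simp only [le_antisymm_iff, TV.T_le_T, and_comm]
@[simp] theorem TV.F_ne_Z {a : Ord1} : TV.F a ≠ TV.Z := TV.F_lt_Z.ne
@[simp] theorem TV.F_ne_T {a b : Ord1} : TV.F a ≠ TV.T b := TV.F_lt_T.ne
@[simp] theorem TV.Z_ne_T {a : Ord1} : TV.Z ≠ TV.T a := TV.Z_lt_T.ne
@[simp] theorem TV.T_ne_F {a b : Ord1} : TV.T a ≠ TV.F b := TV.F_lt_T.ne'
@[simp] theorem TV.Z_ne_F {a : Ord1} : TV.Z ≠ TV.F a := TV.F_lt_Z.ne'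
@[simp] theorem TV.T_ne_Z {a : Ord1} : TV.T a ≠ TV.Z := TV.Z_lt_T.ne'

@[simp] theorem ordOf_F (a : Ord1) : ordOf (TV.F a) = (a.1 : WithTop Ordinal) := rfl
@[simp] theorem ordOf_T (a : Ord1) : ordOf (TV.T a) = (a.1 : WithTop Ordinal) := rfl
@[simp] theorem ordOf_Z : ordOf TV.Z = ⊤ := rfl
@[simp] theorem negv_F (a : Ord1) : negv (TV.F a) = TV.T a.succ := rfl
@[simp] theorem negv_T (a : Ord1) : negv (TV.T a) = TV.F a.succ := rfl
@[simp] theorem negv_Z : negv TV.Z = TV.Z := rfl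

@[simp] theorem Ord1.lt_succ (a : Ord1) : a < a.succ :=
  show a.1 < a.1 + 1 from Order.lt_add_one_iff.2 le_rfl

@[simp] theorem Ord1.le_succ (a : Ord1) : a ≤ a.succ := a.lt_succ.le

@[simp] theorem Ord1.succ_ne_self (a : Ord1) : a.succ ≠ a := a.lt_succ.ne'

theorem Ord1.succ_le_iff {a b : Ord1} : a.succ ≤ b ↔ a < b :=
  show a.1 + 1 ≤ b.1 ↔ a.1 < b.1 from Order.add_one_le_iff

theorem Ord1.lt_succ_iff {a b : Ord1} : a < b.succ ↔ a ≤ b :=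
  show a.1 < b.1 + 1 ↔ a.1 ≤ b.1 from Order.lt_add_one_iff

theorem TV.le_F_iff {v : TV} {a : Ord1} : v ≤ TV.F a ↔ ∃ b ≤ a, v = TV.F b := by
  induction v using TV.induction <;> simp

theorem TV.T_le_iff {v : TV} {a : Ord1} : TV.T a ≤ v ↔ ∃ b ≤ a, v = TV.T b := by
  induction v using TV.induction <;> simp

-- `_root_.lt_inf_iff` does not apply: `⊓` on `TV` is `Sum.Lex`'s, not the linear order's `min`.
theorem TV.lt_inf_iff {a b c : TV} : a < b ⊓ c ↔ a < b ∧ a < c := by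
  rcases le_total b c with h | h
  · rw [inf_eq_left.2 h]
    exact ⟨fun hb => ⟨hb, hb.trans_le h⟩, And.left⟩
  · rw [inf_eq_right.2 h]
    exact ⟨fun hc => ⟨hc.trans_le h, hc⟩, And.right⟩

theorem TV.le_T_succ_of_lt {v : TV} {a : Ord1} (h : v < TV.T a) : v ≤ TV.T a.succ := by
  induction v using TV.induction with
  | F b => exact TV.F_lt_T.le
  | Z => exact TV.Z_lt_T.le
  | T b => exact TV.T_le_T.2 (Ord1.succ_le_iff.2 (TV.T_lt_T.1 h))

theorem ordOf_eq_iff {v : TV} {a : Ord1} :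
    ordOf v = (a.1 : WithTop Ordinal) ↔ v = TV.F a ∨ v = TV.T a := by
  induction v using TV.induction <;> simp [Subtype.ext_iff]

theorem exists_eq_of_ordOf_le {v : TV} {α : Ord1} (h : ordOf v ≤ (α.1 : WithTop Ordinal)) :
    ∃ a ≤ α, v = TV.F a ∨ v = TV.T a := by
  induction v using TV.induction with
  | F a => exact ⟨a, by simpa using h, .inl rfl⟩
  | Z => simp at h
  | T a => exact ⟨a, by simpa using h, .inr rfl⟩

/-- The values already fixed before stage `α`. -/
def IsLow (α : Ord1) (v : TV) : Prop := ordOf v < (α.1 : WithTop Ordinal)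

@[simp] theorem isLow_F {α a : Ord1} : IsLow α (TV.F a) ↔ a < α := WithTop.coe_lt_coe
@[simp] theorem isLow_T {α a : Ord1} : IsLow α (TV.T a) ↔ a < α := WithTop.coe_lt_coe
@[simp] theorem not_isLow_Z {α : Ord1} : ¬IsLow α TV.Z := by simp [IsLow]

theorem isLow_iff {α : Ord1} {v : TV} : IsLow α v ↔ ∃ b < α, v = TV.F b ∨ v = TV.T b := by
  induction v using TV.induction <;> simp

theorem isLow_of_le_F {α b : Ord1} {v : TV} (hv : v ≤ TV.F b) (hb : b < α) : IsLow α v := by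
  obtain ⟨c, hc, rfl⟩ := TV.le_F_iff.1 hv
  exact isLow_F.2 (hc.trans_lt hb)

theorem TV.F_lt_of_not_isLow {α a : Ord1} {v : TV} (ha : a < α) (hv : ¬IsLow α v) :
    TV.F a < v := by
  induction v using TV.induction with
  | F b => exact TV.F_lt_F.2 (ha.trans_le (not_lt.1 (mt isLow_F.2 hv)))
  | Z => exact TV.F_lt_Z
  | T b => exact TV.F_lt_T

theorem TV.lt_T_of_not_isLow {α a : Ord1} {v : TV} (ha : a < α) (hv : ¬IsLow α v) :
    v < TV.T a := by
  induction v using TV.induction with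
  | F b => exact TV.F_lt_T
  | Z => exact TV.Z_lt_T
  | T b => exact TV.T_lt_T.2 (ha.trans_le (not_lt.1 (mt isLow_T.2 hv)))

theorem TV.F_lt_of_not_isLow_of_ne {α : Ord1} {v : TV} (hl : ¬IsLow α v) (hne : v ≠ TV.F α) :
    TV.F α < v := by
  induction v using TV.induction with
  | F b => exact TV.F_lt_F.2 ((not_lt.1 (mt isLow_F.2 hl)).lt_of_ne' (mt (congrArg TV.F) hne))
  | Z => exact TV.F_lt_Z
  | T b => exact TV.F_lt_T

theorem TV.F_lt_negv_of_not_isLow {α : Ord1} {v : TV} (hl : ¬IsLow α v) :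
    TV.F α < negv v := by
  induction v using TV.induction with
  | F b => exact TV.F_lt_T
  | Z => exact TV.F_lt_Z
  | T b => exact TV.F_lt_F.2 ((not_lt.1 (mt isLow_T.2 hl)).trans_lt b.lt_succ)

theorem isLow_of_ordOf_negv_le {α : Ord1} {v : TV} (h : ordOf (negv v) ≤ (α.1 : WithTop Ordinal)) :
    IsLow α v := by
  induction v using TV.induction with
  | F a =>
    rw [negv_F, ordOf_T, WithTop.coe_le_coe] at h
    exact isLow_F.2 (Ord1.succ_le_iff.1 h)
  | Z => simp at h
  | T a =>
    rw [negv_T, ordOf_F, WithTop.coe_le_coe] at h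
    exact isLow_T.2 (Ord1.succ_le_iff.1 h)

theorem ordOf_le_of_T_le {α : Ord1} {v : TV} (h : TV.T α ≤ v) :
    ordOf v ≤ (α.1 : WithTop Ordinal) := by
  obtain ⟨b, hb, rfl⟩ := TV.T_le_iff.1 h
  exact WithTop.coe_le_coe.2 hb

/-! ### Least upper bounds -/

theorem lub_eq_of_isLUB {S : Set TV} {v : TV} (h : IsLUB S v) : lub S = v := by
  rw [lub, dif_pos ⟨v, h⟩]
  exact (Exists.choose_spec (⟨v, h⟩ : ∃ v, IsLUB S v)).unique h

theorem isLUB_of_lub_eq {S : Set TV} {v : TV} (h : lub S = v) (hv : v ≠ TV.Z) : IsLUB S v := by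
  rw [lub] at h
  split at h
  · next hS => exact h ▸ hS.choose_spec
  · exact absurd h.symm hv

/-- `T_{a+1}` is the largest value below `T_a`. -/
theorem T_mem_of_isLUB {S : Set TV} {a : Ord1} (h : IsLUB S (TV.T a)) : TV.T a ∈ S := by
  by_contra hmem
  have hub : TV.T a.succ ∈ upperBounds S := fun s hs =>
    TV.le_T_succ_of_lt ((h.1 hs).lt_of_ne (by rintro rfl; exact hmem hs))
  exact absurd (TV.T_le_T.1 (h.2 hub)) (not_le.2 a.lt_succ)

/-! ### The pointwise order `⊑_α` -/

theorem inf_eq_inf_of_isLow {α : Ord1} {x₁ x₂ y₁ y₂ : TV}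
    (h₁ : IsLow α x₁ ∨ IsLow α y₁ → x₁ = y₁) (h₂ : IsLow α x₂ ∨ IsLow α y₂ → x₂ = y₂)
    (h : IsLow α (x₁ ⊓ x₂)) : x₁ ⊓ x₂ = y₁ ⊓ y₂ := by
  wlog hle : x₁ ≤ x₂ generalizing x₁ x₂ y₁ y₂
  · rw [inf_comm] at h ⊢
    rw [inf_comm y₁]
    exact this h₂ h₁ h (le_of_not_ge hle)
  rw [inf_eq_left.2 hle] at h ⊢
  obtain rfl := h₁ (.inl h)
  refine (inf_eq_left.2 ?_).symm
  by_cases hy₂ : IsLow α x₂ ∨ IsLow α y₂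
  · exact h₂ hy₂ ▸ hle
  rw [not_or] at hy₂
  induction x₁ using TV.induction with
  | F b => exact (TV.F_lt_of_not_isLow (isLow_F.1 h) hy₂.2).le
  | Z => exact absurd h not_isLow_Z
  | T b =>
    obtain ⟨c, hc, rfl⟩ := TV.T_le_iff.1 hle
    exact absurd (isLow_T.2 (hc.trans_lt (isLow_T.1 h))) hy₂.1

/-- Pointwise form of `sqleA α`. -/
structure ApproxLE (α : Ord1) (x y : TV) : Prop where
  eq_of_isLow : IsLow α x ∨ IsLow α y → x = y
  T_of_T : x = TV.T α → y = TV.T α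
  F_of_F : y = TV.F α → x = TV.F α

namespace ApproxLE

variable {α : Ord1} {x y z : TV}

@[refl] theorem refl (x : TV) : ApproxLE α x x := ⟨fun _ => rfl, id, id⟩

theorem trans (h₁ : ApproxLE α x y) (h₂ : ApproxLE α y z) : ApproxLE α x z where
  eq_of_isLow := by
    rintro (hx | hz)
    · obtain rfl := h₁.eq_of_isLow (.inl hx)
      exact h₂.eq_of_isLow (.inl hx)
    · obtain rfl := h₂.eq_of_isLow (.inr hz)
      exact h₁.eq_of_isLow (.inr hz)
  T_of_T := h₂.T_of_T ∘ h₁.T_of_T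
  F_of_F := h₁.F_of_F ∘ h₂.F_of_F

theorem eq_of_T_le (h : ApproxLE α x y) (hx : TV.T α ≤ x) : y = x := by
  obtain ⟨b, hb, rfl⟩ := TV.T_le_iff.1 hx
  rcases hb.lt_or_eq with hb | rfl
  · exact (h.eq_of_isLow (.inl (isLow_T.2 hb))).symm
  · exact h.T_of_T rfl

theorem F_le (h : ApproxLE α x y) (hy : TV.F α ≤ y) : TV.F α ≤ x := by
  by_contra hx
  obtain ⟨b, hb, rfl⟩ := TV.le_F_iff.1 (not_le.1 hx).le
  have hb : b < α := TV.F_lt_F.1 (not_le.1 hx)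
  rw [← h.eq_of_isLow (.inl (isLow_F.2 hb))] at hy
  exact hx hy

theorem le_F (h : ApproxLE α x y) (hy : y ≤ TV.F α) : x ≤ TV.F α := by
  obtain ⟨b, hb, rfl⟩ := TV.le_F_iff.1 hy
  rcases hb.lt_or_eq with hb | rfl
  · rw [h.eq_of_isLow (.inr (isLow_F.2 hb))]
    exact TV.F_le_F.2 hb.le
  · exact (h.F_of_F rfl).le

theorem inf {x₁ x₂ y₁ y₂ : TV} (h₁ : ApproxLE α x₁ y₁) (h₂ : ApproxLE α x₂ y₂) :
    ApproxLE α (x₁ ⊓ x₂) (y₁ ⊓ y₂) where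
  eq_of_isLow := by
    rintro (h | h)
    · exact inf_eq_inf_of_isLow h₁.eq_of_isLow h₂.eq_of_isLow h
    · exact (inf_eq_inf_of_isLow (fun h' => (h₁.eq_of_isLow h'.symm).symm)
        (fun h' => (h₂.eq_of_isLow h'.symm).symm) h).symm
  T_of_T h := by
    have hT : TV.T α ≤ x₁ ⊓ x₂ := h.ge
    rw [h₁.eq_of_T_le (le_inf_iff.1 hT).1, h₂.eq_of_T_le (le_inf_iff.1 hT).2, h]
  F_of_F h := by
    have hF : TV.F α ≤ y₁ ⊓ y₂ := h.ge
    refine le_antisymm ?_ (le_inf (h₁.F_le (le_inf_iff.1 hF).1) (h₂.F_le (le_inf_iff.1 hF).2))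
    rcases le_total y₁ y₂ with hy | hy
    · rw [inf_eq_left.2 hy] at h
      exact inf_le_of_left_le (h₁.F_of_F h).le
    · rw [inf_eq_right.2 hy] at h
      exact inf_le_of_right_le (h₂.F_of_F h).le

theorem negv (h : ApproxLE α x y) : ApproxLE α (negv x) (negv y) where
  eq_of_isLow hl := by
    rw [h.eq_of_isLow (hl.imp (isLow_of_ordOf_negv_le ·.le) (isLow_of_ordOf_negv_le ·.le))]
  T_of_T hx := by
    rwa [← h.eq_of_isLow (.inl (isLow_of_ordOf_negv_le (by simp [hx])))]
  F_of_F hy := by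
    rwa [h.eq_of_isLow (.inr (isLow_of_ordOf_negv_le (by simp [hy])))]

end ApproxLE

theorem evalBody_cons (I : Interp) (l : Lit) (b : List Lit) :
    evalBody I (l :: b) = evalLit I l ⊓ evalBody I b := rfl

section Interp

variable {α : Ord1} {I J : Interp}

theorem ApproxLE.evalLit (h : ∀ q, ApproxLE α (I q) (J q)) (l : Lit) :
    ApproxLE α (evalLit I l) (evalLit J l) := by
  cases l with
  | pos n => exact h n
  | neg n => exact (h n).negv
  | tt | ff => exact .refl _

theorem ApproxLE.evalBody (h : ∀ q, ApproxLE α (I q) (J q)) (b : List Lit) :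
    ApproxLE α (evalBody I b) (evalBody J b) := by
  induction b with
  | nil => exact .refl _
  | cons l b ih => exact (ApproxLE.evalLit h l).inf ih

end Interp

section LubRange

variable {α : Ord1} {ι : Type*} {f g : ι → TV}

theorem lub_range_eq_of_isLow (hfg : ∀ i, IsLow α (f i) ∨ IsLow α (g i) → f i = g i)
    (h : IsLow α (lub (range f))) : lub (range f) = lub (range g) := by
  obtain ⟨b, hb, hv | hv⟩ := isLow_iff.1 h
  · have hf := isLUB_of_lub_eq hv TV.F_ne_Z
    have : f = g := funext fun i => hfg i (.inl (isLow_of_le_F (hf.1 ⟨i, rfl⟩) hb))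
    rw [this]
  · have hf := isLUB_of_lub_eq hv TV.T_ne_Z
    obtain ⟨i, hi⟩ := T_mem_of_isLUB hf
    have hgi : g i = TV.T b := (hfg i (.inl (hi ▸ isLow_T.2 hb))).symm.trans hi
    refine hv.trans (lub_eq_of_isLUB
      ⟨?_, fun _ hv => hv (show TV.T b ∈ range g from ⟨i, hgi⟩)⟩).symm
    rintro _ ⟨j, rfl⟩
    by_cases hl : IsLow α (f j) ∨ IsLow α (g j)
    · exact hfg j hl ▸ hf.1 ⟨j, rfl⟩
    · exact (TV.lt_T_of_not_isLow hb (not_or.1 hl).2).le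

theorem lub_range_eq_T (hfg : ∀ i, IsLow α (f i) ∨ IsLow α (g i) → f i = g i)
    (hg : lub (range g) = TV.T α) (hf : TV.T α ∈ range f) : lub (range f) = TV.T α := by
  refine lub_eq_of_isLUB ⟨?_, fun v hv => hv hf⟩
  rintro _ ⟨j, rfl⟩
  by_contra hj
  obtain ⟨b, hb, hfj⟩ := TV.T_le_iff.1 (not_le.1 hj).le
  have hb : b < α := hb.lt_of_ne (by rintro rfl; exact hj hfj.le)
  have hgj := (isLUB_of_lub_eq hg TV.T_ne_Z).1 ⟨j, rfl⟩
  rw [← hfg j (.inl (hfj ▸ isLow_T.2 hb)), hfj, TV.T_le_T] at hgj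
  exact not_le.2 hb hgj

theorem lub_range_eq_F (hfg : ∀ i, IsLow α (f i) ∨ IsLow α (g i) → f i = g i)
    (hg : lub (range g) = TV.F α) (hf : ∀ i, f i ≤ TV.F α) : lub (range f) = TV.F α := by
  refine lub_eq_of_isLUB ⟨?_, fun v hv => ?_⟩
  · rintro _ ⟨i, rfl⟩
    exact hf i
  by_contra hlt
  obtain ⟨b, -, rfl⟩ := TV.le_F_iff.1 (not_le.1 hlt).le
  have hb : b < α := TV.F_lt_F.1 (not_le.1 hlt)
  have hub : TV.F b ∈ upperBounds (range g) := by
    rintro _ ⟨j, rfl⟩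
    have hfj : f j ≤ TV.F b := hv (mem_range_self j)
    exact hfg j (.inl (isLow_of_le_F hfj hb)) ▸ hfj
  exact not_le.2 hb (TV.F_le_F.1 ((isLUB_of_lub_eq hg TV.F_ne_Z).2 hub))

theorem ApproxLE.lub_range (h : ∀ i, ApproxLE α (f i) (g i)) :
    ApproxLE α (lub (range f)) (lub (range g)) where
  eq_of_isLow := by
    rintro (hl | hl)
    · exact lub_range_eq_of_isLow (fun i => (h i).eq_of_isLow) hl
    · exact (lub_range_eq_of_isLow (fun i hi => ((h i).eq_of_isLow hi.symm).symm) hl).symm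
  T_of_T hf := by
    obtain ⟨i, hi⟩ := T_mem_of_isLUB (isLUB_of_lub_eq hf TV.T_ne_Z)
    exact lub_range_eq_T (fun i hi => ((h i).eq_of_isLow hi.symm).symm) hf ⟨i, (h i).T_of_T hi⟩
  F_of_F hg := lub_range_eq_F (fun i => (h i).eq_of_isLow) hg
    fun i => (h i).le_F ((isLUB_of_lub_eq hg TV.F_ne_Z).1 ⟨i, rfl⟩)

end LubRange

theorem TP_apply (P : Program) (I : Interp) (p : ℕ) :
    TP P I p = lub (range fun c : {c : Clause // c ∈ P ∧ c.head = p} => evalBody I c.1.body) := by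
  simp only [TP, Set.range, Subtype.exists, exists_prop, and_assoc]

theorem ApproxLE.TP {P : Program} {α : Ord1} {I J : Interp} (h : ∀ q, ApproxLE α (I q) (J q))
    (p : ℕ) : ApproxLE α (TP P I p) (TP P J p) := by
  rw [TP_apply, TP_apply]
  exact ApproxLE.lub_range fun c => ApproxLE.evalBody h c.1.body

/-! ### Agreement up to `α` -/

section EqA

variable {α : Ord1} {I J K : Interp}

theorem eqA_iff : eqA α I J ↔
    ∀ p, ordOf (I p) ≤ (α.1 : WithTop Ordinal) ∨ ordOf (J p) ≤ (α.1 : WithTop Ordinal) →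
      I p = J p := by
  constructor
  · intro h p hp
    have key : ∀ a ≤ α, ∀ v, v = TV.F a ∨ v = TV.T a → (I p = v ↔ J p = v) := by
      rintro a ha _ (rfl | rfl)
      exacts [Set.ext_iff.1 (h a ha).2 p, Set.ext_iff.1 (h a ha).1 p]
    rcases hp with hp | hp
    · obtain ⟨a, ha, hv⟩ := exists_eq_of_ordOf_le hp
      exact ((key a ha _ hv).1 rfl).symm
    · obtain ⟨a, ha, hv⟩ := exists_eq_of_ordOf_le hp
      exact (key a ha _ hv).2 rfl
  · intro h a ha
    have key : ∀ v, ordOf v ≤ (α.1 : WithTop Ordinal) → ∀ p, p ∈ level I v ↔ p ∈ level J v :=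
      fun v hv p => ⟨fun hp => (h p (.inl ((show I p = v from hp) ▸ hv))).symm.trans hp,
        fun hp => (h p (.inr ((show J p = v from hp) ▸ hv))).trans hp⟩
    exact ⟨Set.ext (key _ (WithTop.coe_le_coe.2 ha)), Set.ext (key _ (WithTop.coe_le_coe.2 ha))⟩

theorem eqA.refl (α : Ord1) (I : Interp) : eqA α I I := eqA_iff.2 fun _ _ => rfl

theorem eqA.symm (h : eqA α I J) : eqA α J I :=
  eqA_iff.2 fun p hp => (eqA_iff.1 h p hp.symm).symm

theorem eqA.trans (h₁ : eqA α I J) (h₂ : eqA α J K) : eqA α I K := by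
  rw [eqA_iff] at *
  rintro p (hp | hp)
  · have hIJ := h₁ p (.inl hp)
    exact hIJ.trans (h₂ p (.inl (hIJ ▸ hp)))
  · have hJK := h₂ p (.inr hp)
    exact (h₁ p (.inr (hJK ▸ hp))).trans hJK

theorem forall_lt_eqA_iff :
    (∀ β < α, eqA β I J) ↔ ∀ p, IsLow α (I p) ∨ IsLow α (J p) → I p = J p := by
  constructor
  · intro h p hp
    rcases hp with hp | hp
    · obtain ⟨b, hb, hv⟩ := isLow_iff.1 hp
      exact eqA_iff.1 (h b hb) p (.inl (ordOf_eq_iff.2 hv).le)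
    · obtain ⟨b, hb, hv⟩ := isLow_iff.1 hp
      exact eqA_iff.1 (h b hb) p (.inr (ordOf_eq_iff.2 hv).le)
  · exact fun h β hβ => eqA_iff.2 fun p hp =>
      h p (hp.imp (·.trans_lt (WithTop.coe_lt_coe.2 hβ)) (·.trans_lt (WithTop.coe_lt_coe.2 hβ)))

theorem eqA_iff_approxLE :
    eqA α I J ↔ ∀ p, ApproxLE α (I p) (J p) ∧ ApproxLE α (J p) (I p) := by
  rw [eqA_iff]
  constructor
  · intro h p
    refine ⟨⟨fun hl => h p (hl.imp (·.le) (·.le)), fun hv => ?_, fun hv => ?_⟩,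
      ⟨fun hl => (h p (hl.symm.imp (·.le) (·.le))).symm, fun hv => ?_, fun hv => ?_⟩⟩
    · exact (h p (.inl (ordOf_eq_iff.2 (.inr hv)).le)).symm.trans hv
    · exact (h p (.inr (ordOf_eq_iff.2 (.inl hv)).le)).trans hv
    · exact (h p (.inr (ordOf_eq_iff.2 (.inr hv)).le)).trans hv
    · exact (h p (.inl (ordOf_eq_iff.2 (.inl hv)).le)).symm.trans hv
  · intro h p hp
    wlog hI : ordOf (I p) ≤ (α.1 : WithTop Ordinal) generalizing I J
    · exact (this (fun p => (h p).symm) hp.symm (hp.resolve_left hI)).symm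
    rcases hI.lt_or_eq with hl | he
    · exact (h p).1.eq_of_isLow (.inl hl)
    · rcases ordOf_eq_iff.1 he with hv | hv
      · exact hv.trans ((h p).2.F_of_F hv).symm
      · exact hv.trans ((h p).1.T_of_T hv).symm

theorem eqA.TP (P : Program) (h : eqA α I J) : eqA α (TP P I) (TP P J) := by
  rw [eqA_iff_approxLE] at *
  exact fun p => ⟨ApproxLE.TP (fun q => (h q).1) p, ApproxLE.TP (fun q => (h q).2) p⟩

end EqA

/-! ### The stage operator `T^ω_{P,α}` -/

section TPomega

variable {P : Program} {α : Ord1} {I : Interp} {p : ℕ}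

theorem TPomega_apply : TPomega P α I p =
    if IsLow α (I p) then I p
    else if ∃ n, (TP P)^[n] I p = TV.T α then TV.T α
    else if ∀ n, (TP P)^[n] I p = TV.F α then TV.F α
    else TV.F α.succ := by
  unfold TPomega IsLow
  split_ifs <;> rfl

theorem TPomega_of_isLow (h : IsLow α (I p)) : TPomega P α I p = I p := if_pos h

theorem TPomega_of_not_isLow (h : ¬IsLow α (I p)) :
    TPomega P α I p = TV.T α ∨ TPomega P α I p = TV.F α ∨ TPomega P α I p = TV.F α.succ := by
  rw [TPomega_apply, if_neg h]
  split_ifs <;> simp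

theorem isLow_TPomega_iff : IsLow α (TPomega P α I p) ↔ IsLow α (I p) := by
  by_cases h : IsLow α (I p)
  · rw [TPomega_of_isLow h]
  · rcases TPomega_of_not_isLow (P := P) h with h' | h' | h' <;> simp [h', h]

theorem TPomega_eq_T_iff :
    TPomega P α I p = TV.T α ↔ ¬IsLow α (I p) ∧ ∃ n, (TP P)^[n] I p = TV.T α := by
  by_cases h : IsLow α (I p)
  · rw [TPomega_of_isLow h]
    exact iff_of_false (fun he => by rw [he] at h; simp at h) (·.1 h)
  · rw [TPomega_apply]
    split_ifs <;> simp_all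

theorem TPomega_eq_F_iff :
    TPomega P α I p = TV.F α ↔ ¬IsLow α (I p) ∧ ∀ n, (TP P)^[n] I p = TV.F α := by
  by_cases h : IsLow α (I p)
  · rw [TPomega_of_isLow h]
    exact iff_of_false (fun he => by rw [he] at h; simp at h) (·.1 h)
  · rw [TPomega_apply]
    split_ifs with hT <;> simp_all
    obtain ⟨n, hn⟩ := hT
    exact ⟨n, by simp [hn]⟩

theorem eqA_TPomega_of_lt {β : Ord1} (hβ : β < α) : eqA β (TPomega P α I) I := by
  refine eqA_iff.2 fun p hp => TPomega_of_isLow ?_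
  have hβα : (β.1 : WithTop Ordinal) < α.1 := WithTop.coe_lt_coe.2 hβ
  exact hp.elim (fun h => isLow_TPomega_iff.1 (h.trans_lt hβα)) (·.trans_lt hβα)

end TPomega

theorem isLow_succ_TPomega_or_eq_F_succ {P : Program} {α : Ord1} {J : Interp} (p : ℕ) :
    IsLow α.succ (TPomega P α J p) ∨ TPomega P α J p = TV.F α.succ := by
  by_cases h : IsLow α (J p)
  · rw [TPomega_of_isLow h]
    exact .inl (h.trans (WithTop.coe_lt_coe.2 α.lt_succ))
  · rcases TPomega_of_not_isLow (P := P) h with h' | h' | h' <;> simp [h']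

section Stage

variable {P : Program} {α : Ord1} {I : Interp} {p : ℕ}

theorem approxLE_TP_self (hI : ∀ p, IsLow α (I p) ∨ I p = TV.F α)
    (hfix : ∀ β < α, eqA β (TP P I) I) (p : ℕ) : ApproxLE α (I p) (TP P I p) where
  eq_of_isLow hl := (forall_lt_eqA_iff.1 hfix p hl.symm).symm
  T_of_T h := by
    rcases hI p with hl | hF
    · rw [h] at hl
      simp at hl
    · simp [hF] at h
  F_of_F h := (hI p).resolve_left fun hl => by
    rw [← forall_lt_eqA_iff.1 hfix p (.inr hl), h] at hl
    simp at hl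

theorem approxLE_iterate_succ (h₀ : ∀ p, ApproxLE α (I p) (TP P I p)) (n : ℕ) (p : ℕ) :
    ApproxLE α ((TP P)^[n] I p) ((TP P)^[n + 1] I p) := by
  induction n generalizing p with
  | zero => exact h₀ p
  | succ n ih =>
    rw [Function.iterate_succ_apply' _ n, Function.iterate_succ_apply' _ (n + 1)]
    exact ApproxLE.TP ih p

theorem approxLE_iterate_of_le (h₀ : ∀ p, ApproxLE α (I p) (TP P I p)) {m n : ℕ} (hmn : m ≤ n)
    (p : ℕ) : ApproxLE α ((TP P)^[m] I p) ((TP P)^[n] I p) := by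
  induction n, hmn using Nat.le_induction with
  | base => rfl
  | succ n _ ih => exact ih.trans (approxLE_iterate_succ h₀ n p)

theorem iterate_eq_of_isLow (h₀ : ∀ p, ApproxLE α (I p) (TP P I p)) (n : ℕ)
    (hp : IsLow α (I p) ∨ IsLow α ((TP P)^[n] I p)) : (TP P)^[n] I p = I p :=
  ((approxLE_iterate_of_le h₀ n.zero_le p).eq_of_isLow hp).symm

theorem approxLE_iterate_TPomega (h₀ : ∀ p, ApproxLE α (I p) (TP P I p)) (n p : ℕ) :
    ApproxLE α ((TP P)^[n] I p) (TPomega P α I p) where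
  eq_of_isLow hl := by
    have hIp : IsLow α (I p) :=
      hl.elim (fun h => iterate_eq_of_isLow h₀ n (.inr h) ▸ h) isLow_TPomega_iff.1
    rw [TPomega_of_isLow hIp, iterate_eq_of_isLow h₀ n (.inl hIp)]
  T_of_T h := by
    refine TPomega_eq_T_iff.2 ⟨fun hl => ?_, n, h⟩
    rw [← iterate_eq_of_isLow h₀ n (.inl hl), h] at hl
    simp at hl
  F_of_F h := (TPomega_eq_F_iff.1 h).2 n

theorem eqA_TP_TPomega_of_lt (hfix : ∀ β < α, eqA β (TP P I) I) {β : Ord1} (hβ : β < α) :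
    eqA β (TP P (TPomega P α I)) (TPomega P α I) :=
  have h := eqA_TPomega_of_lt (P := P) (I := I) hβ
  ((h.TP P).trans (hfix β hβ)).trans h.symm

theorem eventually_iterate_eq_of_T_le (h₀ : ∀ p, ApproxLE α (I p) (TP P I p))
    (hp : TV.T α ≤ TPomega P α I p) : ∀ᶠ n in atTop, (TP P)^[n] I p = TPomega P α I p := by
  obtain ⟨b, hb, hMp⟩ := TV.T_le_iff.1 hp
  rcases hb.lt_or_eq with hb | rfl
  · exact .of_forall fun n =>
      (approxLE_iterate_TPomega h₀ n p).eq_of_isLow (.inr (hMp ▸ isLow_T.2 hb))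
  · obtain ⟨-, n, hn⟩ := TPomega_eq_T_iff.1 hMp
    exact eventually_atTop.2
      ⟨n, fun m hm => ((approxLE_iterate_of_le h₀ hm p).T_of_T hn).trans hMp.symm⟩

theorem eventually_F_lt_iterate (h₀ : ∀ p, ApproxLE α (I p) (TP P I p))
    (hp : TV.F α < TPomega P α I p) : ∀ᶠ n in atTop, TV.F α < (TP P)^[n] I p := by
  by_cases hl : IsLow α (I p)
  · refine .of_forall fun n => ?_
    rwa [iterate_eq_of_isLow h₀ n (.inl hl), ← TPomega_of_isLow (P := P) hl]
  obtain ⟨n₀, hn₀⟩ : ∃ n₀, (TP P)^[n₀] I p ≠ TV.F α := by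
    by_contra! hall
    exact hp.ne' (TPomega_eq_F_iff.2 ⟨hl, hall⟩)
  refine eventually_atTop.2 ⟨n₀, fun m hm => TV.F_lt_of_not_isLow_of_ne ?_ ?_⟩
  · exact fun hm' => hl (iterate_eq_of_isLow h₀ m (.inr hm') ▸ hm')
  · exact fun hF => hn₀ ((approxLE_iterate_of_le h₀ hm p).F_of_F hF)

theorem eventually_evalBody_iterate_eq (h₀ : ∀ p, ApproxLE α (I p) (TP P I p)) {b : List Lit}
    (hb : TV.T α ≤ evalBody (TPomega P α I) b) :
    ∀ᶠ n in atTop, evalBody ((TP P)^[n] I) b = evalBody (TPomega P α I) b := by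
  induction b with
  | nil => exact .of_forall fun _ => rfl
  | cons l b ih =>
    rw [evalBody_cons, le_inf_iff] at hb
    have hl : ∀ᶠ n in atTop, evalLit ((TP P)^[n] I) l = evalLit (TPomega P α I) l := by
      cases l with
      | pos q => exact eventually_iterate_eq_of_T_le h₀ hb.1
      | neg q =>
        have hq := isLow_of_ordOf_negv_le (ordOf_le_of_T_le hb.1)
        exact .of_forall fun n =>
          congrArg negv ((approxLE_iterate_TPomega h₀ n q).eq_of_isLow (.inr hq))
      | tt | ff => exact .of_forall fun _ => rfl
    filter_upwards [hl, ih hb.2] with n hln hbn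
    rw [evalBody_cons, evalBody_cons, hln, hbn]

theorem eventually_F_lt_evalBody_iterate (h₀ : ∀ p, ApproxLE α (I p) (TP P I p)) {b : List Lit}
    (hb : TV.F α < evalBody (TPomega P α I) b) :
    ∀ᶠ n in atTop, TV.F α < evalBody ((TP P)^[n] I) b := by
  induction b with
  | nil => exact .of_forall fun _ => hb
  | cons l b ih =>
    rw [evalBody_cons, TV.lt_inf_iff] at hb
    have hl : ∀ᶠ n in atTop, TV.F α < evalLit ((TP P)^[n] I) l := by
      cases l with
      | pos q => exact eventually_F_lt_iterate h₀ hb.1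
      | neg q =>
        refine .of_forall fun n => ?_
        by_cases hq : IsLow α ((TP P)^[n] I q)
        · rw [evalLit, (approxLE_iterate_TPomega h₀ n q).eq_of_isLow (.inl hq)]
          exact hb.1
        · exact TV.F_lt_negv_of_not_isLow hq
      | tt | ff => exact .of_forall fun _ => hb.1
    filter_upwards [hl, ih hb.2] with n hln hbn
    rw [evalBody_cons]
    exact TV.lt_inf_iff.2 ⟨hln, hbn⟩

theorem TP_TPomega_eq_T (h₀ : ∀ p, ApproxLE α (I p) (TP P I p))
    (h : TPomega P α I p = TV.T α) : TP P (TPomega P α I) p = TV.T α := by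
  obtain ⟨-, n, hn⟩ := TPomega_eq_T_iff.1 h
  have hn' := (approxLE_iterate_succ h₀ n p).T_of_T hn
  rw [Function.iterate_succ_apply'] at hn'
  exact (ApproxLE.TP (approxLE_iterate_TPomega h₀ n) p).T_of_T hn'

theorem TPomega_eq_F_of_TP (h₀ : ∀ p, ApproxLE α (I p) (TP P I p))
    (h : TP P (TPomega P α I) p = TV.F α) : TPomega P α I p = TV.F α := by
  have hsucc : ∀ n, (TP P)^[n + 1] I p = TV.F α := fun n => by
    rw [Function.iterate_succ_apply']
    exact (ApproxLE.TP (approxLE_iterate_TPomega h₀ n) p).F_of_F h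
  have h0 : I p = TV.F α := (approxLE_iterate_succ h₀ 0 p).F_of_F (hsucc 0)
  refine TPomega_eq_F_iff.2 ⟨by simp [h0], fun n => ?_⟩
  cases n
  exacts [h0, hsucc _]

theorem TPomega_eq_T_of_TP (h₀ : ∀ p, ApproxLE α (I p) (TP P I p))
    (h : TP P (TPomega P α I) p = TV.T α) : TPomega P α I p = TV.T α := by
  rw [TP_apply] at h
  obtain ⟨c, hc⟩ := T_mem_of_isLUB (isLUB_of_lub_eq h TV.T_ne_Z)
  obtain ⟨n, hn⟩ := (eventually_evalBody_iterate_eq h₀ hc.ge).exists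
  have hTn : TP P ((TP P)^[n] I) p = TV.T α := by
    rw [TP_apply]
    exact lub_range_eq_T
      (fun c => (ApproxLE.evalBody (approxLE_iterate_TPomega h₀ n) c.1.body).eq_of_isLow) h
      ⟨c, hn.trans hc⟩
  rw [← Function.iterate_succ_apply' (TP P) n I] at hTn
  exact (approxLE_iterate_TPomega h₀ (n + 1) p).T_of_T hTn

theorem TP_TPomega_eq_F (h₀ : ∀ p, ApproxLE α (I p) (TP P I p))
    (h : TPomega P α I p = TV.F α) : TP P (TPomega P α I) p = TV.F α := by
  have hTP : ∀ n, TP P ((TP P)^[n] I) p = TV.F α := fun n => by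
    rw [← Function.iterate_succ_apply' (TP P) n I]
    exact (TPomega_eq_F_iff.1 h).2 _
  rw [TP_apply]
  refine lub_range_eq_F (fun c hc =>
      ((ApproxLE.evalBody (approxLE_iterate_TPomega h₀ 0) c.1.body).eq_of_isLow hc.symm).symm)
    (by rw [← TP_apply]; exact hTP 0) fun c => ?_
  by_contra hc
  obtain ⟨n, hn⟩ := (eventually_F_lt_evalBody_iterate h₀ (not_le.1 hc)).exists
  have hTPn := hTP n
  rw [TP_apply] at hTPn
  exact not_le.2 hn ((isLUB_of_lub_eq hTPn TV.F_ne_Z).1 ⟨c, rfl⟩)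

theorem eqA_TP_TPomega (hI : ∀ p, IsLow α (I p) ∨ I p = TV.F α)
    (hfix : ∀ β < α, eqA β (TP P I) I) : eqA α (TP P (TPomega P α I)) (TPomega P α I) := by
  have h₀ := approxLE_TP_self hI hfix
  have hlow := forall_lt_eqA_iff.1 fun β hβ => eqA_TP_TPomega_of_lt hfix hβ
  exact eqA_iff_approxLE.2 fun p =>
    ⟨⟨hlow p, TPomega_eq_T_of_TP h₀, TP_TPomega_eq_F h₀⟩,
      ⟨fun hl => (hlow p hl.symm).symm, TP_TPomega_eq_T h₀, TPomega_eq_F_of_TP h₀⟩⟩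

end Stage

/-! ### The approximations `M_α` -/

section Sqcup

variable {α : Ord1} (F : Ord1 → Interp)

theorem sqcupI_apply (p : ℕ) :
    (∃ γ < α, ordOf (F γ p) = (γ.1 : WithTop Ordinal) ∧
      sqcupI α (fun b hb => F ⟨b, hb.trans α.2⟩) p = F γ p) ∨
    ((∀ γ < α, ordOf (F γ p) ≠ (γ.1 : WithTop Ordinal)) ∧
      sqcupI α (fun b hb => F ⟨b, hb.trans α.2⟩) p = TV.F α) := by
  unfold sqcupI
  split_ifs with h
  · exact .inl ⟨⟨h.choose, h.choose_spec.choose.trans α.2⟩, h.choose_spec.choose,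
      h.choose_spec.choose_spec, rfl⟩
  · simp only [not_exists] at h
    exact .inr ⟨fun γ hγ => h γ.1 hγ, rfl⟩

theorem isLow_sqcupI_or_eq_F (p : ℕ) :
    IsLow α (sqcupI α (fun b hb => F ⟨b, hb.trans α.2⟩) p) ∨
      sqcupI α (fun b hb => F ⟨b, hb.trans α.2⟩) p = TV.F α := by
  rcases sqcupI_apply F p with ⟨γ, hγα, hγ, hS⟩ | ⟨-, hS⟩
  · exact .inl (hS ▸ hγ.trans_lt (WithTop.coe_lt_coe.2 hγα))
  · exact .inr hS

theorem eqA_sqcupI (hF : ∀ β γ : Ord1, β ≤ γ → γ < α → eqA β (F γ) (F β)) {β : Ord1}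
    (hβ : β < α) : eqA β (sqcupI α fun b hb => F ⟨b, hb.trans α.2⟩) (F β) := by
  refine eqA_iff.2 fun p hp => ?_
  rcases sqcupI_apply F p with ⟨γ, hγα, hγ, hS⟩ | ⟨hnone, hS⟩ <;> rw [hS] at hp ⊢
  · rcases le_or_gt γ β with hγβ | hβγ
    · exact (eqA_iff.1 (hF γ β hγβ hβ) p (.inr hγ.le)).symm
    · exact eqA_iff.1 (hF β γ hβγ.le hγα) p hp
  · have hβp : ordOf (F β p) ≤ (β.1 : WithTop Ordinal) :=
      hp.resolve_left (not_le.2 (WithTop.coe_lt_coe.2 hβ))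
    obtain ⟨γ, hγβ, hv⟩ := exists_eq_of_ordOf_le hβp
    have hγ := ordOf_eq_iff.2 hv
    have hFγ := eqA_iff.1 (hF γ β hγβ hβ) p (.inl hγ.le)
    exact (hnone γ (hγβ.trans_lt hβ) (hFγ ▸ hγ)).elim

end Sqcup

theorem MA_zero (P : Program) : MA P 0 = TPomega P O0 botI := by
  rw [MA, Ordinal.limitRecOn_zero]

theorem MA_succ (P : Program) (o : Ordinal) (h : o + 1 < ω₁) :
    MA P (o + 1) = TPomega P ⟨o + 1, h⟩ (MA P o) := by
  rw [MA, Ordinal.limitRecOn_add_one, dif_pos h]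
  rfl

theorem MA_limit (P : Program) (o : Ordinal) (hl : Order.IsSuccLimit o) (h : o < ω₁) :
    MA P o = TPomega P ⟨o, h⟩ (sqcupI ⟨o, h⟩ fun b _ => MA P b) := by
  rw [MA, Ordinal.limitRecOn_limit _ _ _ _ hl, dif_pos h]
  rfl

theorem exists_Mα_eq_TPomega (P : Program) (α : Ord1) :
    ∃ J : Interp, Mα P α = TPomega P α J ∧ (∀ p, IsLow α (J p) ∨ J p = TV.F α) ∧
      ∀ β < α, eqA β J (Mα P β) := by
  induction α using WellFoundedLT.induction with
  | ind α IH =>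
  have coh : ∀ β γ : Ord1, β ≤ γ → γ < α → eqA β (Mα P γ) (Mα P β) := by
    intro β γ hβγ hγ
    rcases hβγ.lt_or_eq with hβγ | rfl
    · obtain ⟨J, hM, -, hJ⟩ := IH γ hγ
      exact hM ▸ (eqA_TPomega_of_lt hβγ).trans (hJ β hβγ)
    · exact eqA.refl _ _
  obtain ⟨o, ho⟩ := α
  rcases Ordinal.zero_or_succ_or_isSuccLimit o with rfl | ⟨a, ha⟩ | hl
  · exact ⟨botI, MA_zero P, fun _ => .inr rfl, fun β hβ => absurd hβ (not_lt_zero (a := β.1))⟩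
  · obtain rfl : o = a + 1 := ha.symm.trans (Order.succ_eq_add_one a)
    have ha : a < ω₁ := (Order.lt_add_one_iff.2 le_rfl).trans ho
    obtain ⟨J, hM, -, -⟩ := IH ⟨a, ha⟩ (Ord1.lt_succ ⟨a, ha⟩)
    refine ⟨Mα P ⟨a, ha⟩, MA_succ P a ho, fun p => ?_, fun β hβ =>
      coh β ⟨a, ha⟩ (Ord1.lt_succ_iff.1 hβ) (Ord1.lt_succ ⟨a, ha⟩)⟩
    rw [hM]
    exact isLow_succ_TPomega_or_eq_F_succ p
  · exact ⟨_, MA_limit P o hl ho, isLow_sqcupI_or_eq_F (Mα P), fun β hβ => eqA_sqcupI (Mα P) coh hβ⟩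

/-- For every countable ordinal `α`, `T_P(M_α) =_α M_α`. -/
theorem TP_MA_eqA (P : Program) (α : Ord1) : eqA α (TP P (Mα P α)) (Mα P α) := by
  induction α using WellFoundedLT.induction with
  | ind α IH =>
  obtain ⟨J, hM, hJ, hJM⟩ := exists_Mα_eq_TPomega P α
  rw [hM]
  exact eqA_TP_TPomega hJ fun β hβ =>
    (((hJM β hβ).TP P).trans (IH β hβ)).trans (hJM β hβ).symm

end IVS
end
end

section
/- If N is an infinite-valued model of P, then T_P(N) ⊑_∞ N. -/
open Ordinal Set

noncomputable section
attribute [local instance] Classical.propDecidable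

namespace IVS

/-!
A model satisfies `N(p) ≥ N(body)` for every clause with head `p`, and `V` is complete, so
`T_P(N) ≤ N` pointwise. A pointwise inequality `I ≤ J` with `I ≠ J` already gives `I ⊏_α J` at the
least order `α` where the level sets differ: below `α` they agree, so an atom with `I(p) = T_α`
must have `J(p) = T_β` with `β ≤ α` and `J ∥ T_β = I ∥ T_β` for `β < α`, forcing `J(p) = T_α`;
dually for `F_α`.
-/

lemma exists_isLeast_of_nonempty {α : Type*} [LinearOrder α] [WellFoundedLT α] {s : Set α}
    (hs : s.Nonempty) : ∃ a, IsLeast s a :=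
  ⟨_, wellFounded_lt.min_mem s hs, fun _ hx => wellFounded_lt.min_le hx⟩

lemma TV.cases (v : TV) : (∃ a, v = TV.F a) ∨ v = TV.Z ∨ ∃ a, v = TV.T a := by
  rcases v with a | (_ | a)
  · exact Or.inl ⟨a, rfl⟩
  · exact Or.inr (Or.inl rfl)
  · exact Or.inr (Or.inr ⟨OrderDual.ofDual a, rfl⟩)

namespace TV

variable {a b : Ord1}

lemma F_le_F_s16 : F a ≤ F b ↔ a ≤ b := Sum.Lex.inl_le_inl_iff

lemma T_le_T_s16 : T a ≤ T b ↔ b ≤ a := by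
  rw [T, T, Sum.Lex.inr_le_inr_iff, Sum.Lex.inr_le_inr_iff]
  rfl

lemma F_le_Z : F a ≤ Z := Sum.Lex.inl_le_inr _ _

lemma F_le_T : F a ≤ T b := Sum.Lex.inl_le_inr _ _

lemma Z_le_T : Z ≤ T a := Sum.Lex.inr_le_inr_iff.2 (Sum.Lex.inl_le_inr _ _)

lemma not_Z_le_F : ¬ Z ≤ F a := Sum.Lex.not_inr_le_inl

lemma not_T_le_F : ¬ T a ≤ F b := Sum.Lex.not_inr_le_inl

lemma not_T_le_Z : ¬ T a ≤ Z := by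
  rw [Z, T, Sum.Lex.inr_le_inr_iff]
  exact Sum.Lex.not_inr_le_inl

lemma T_injective : Function.Injective T := fun _ _ h => by simpa [T] using h

lemma F_injective : Function.Injective F := fun _ _ h => by simpa [F] using h

lemma eq_T_of_T_le {v : TV} (h : T a ≤ v) : ∃ b ≤ a, v = T b := by
  rcases TV.cases v with ⟨b, rfl⟩ | rfl | ⟨b, rfl⟩
  · exact absurd h not_T_le_F
  · exact absurd h not_T_le_Z
  · exact ⟨b, T_le_T_s16.1 h, rfl⟩

lemma eq_F_of_le_F {v : TV} (h : v ≤ F a) : ∃ b ≤ a, v = F b := by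
  rcases TV.cases v with ⟨b, rfl⟩ | rfl | ⟨b, rfl⟩
  · exact ⟨b, F_le_F_s16.1 h, rfl⟩
  · exact absurd h not_Z_le_F
  · exact absurd h not_T_le_F

variable {S : Set TV} {m : Ord1}

lemma isLUB_T_of_isLeast (h : IsLeast (T ⁻¹' S) m) : IsLUB S (T m) := by
  refine ⟨fun v hv => ?_, fun u hu => hu h.1⟩
  rcases TV.cases v with ⟨b, rfl⟩ | rfl | ⟨b, rfl⟩
  · exact F_le_T
  · exact Z_le_T
  · exact T_le_T_s16.2 (h.2 hv)

lemma isLUB_Z_of_mem (hZ : Z ∈ S) (hT : ∀ a, T a ∉ S) : IsLUB S Z := by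
  refine ⟨fun v hv => ?_, fun u hu => hu hZ⟩
  rcases TV.cases v with ⟨b, rfl⟩ | rfl | ⟨b, rfl⟩
  · exact F_le_Z
  · exact le_rfl
  · exact absurd hv (hT b)

lemma F_mem_upperBounds_iff (hS : S ⊆ range F) {b : Ord1} :
    F b ∈ upperBounds S ↔ b ∈ upperBounds (F ⁻¹' S) := by
  refine ⟨fun h a ha => F_le_F_s16.1 (h ha), fun h v hv => ?_⟩
  obtain ⟨a, rfl⟩ := hS hv
  exact F_le_F_s16.2 (h hv)

lemma isLUB_F_of_isLUB (hS : S ⊆ range F) (h : IsLUB (F ⁻¹' S) m) : IsLUB S (F m) := by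
  refine ⟨(F_mem_upperBounds_iff hS).2 h.1, fun u hu => ?_⟩
  rcases TV.cases u with ⟨b, rfl⟩ | rfl | ⟨b, rfl⟩
  · exact F_le_F_s16.2 (h.2 ((F_mem_upperBounds_iff hS).1 hu))
  · exact F_le_Z
  · exact F_le_T

lemma isLUB_Z_of_not_bddAbove (hS : S ⊆ range F) (h : ¬BddAbove (F ⁻¹' S)) : IsLUB S Z := by
  refine ⟨fun v hv => ?_, fun u hu => ?_⟩
  · obtain ⟨a, rfl⟩ := hS hv
    exact F_le_Z
  rcases TV.cases u with ⟨b, rfl⟩ | rfl | ⟨b, rfl⟩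
  · exact absurd ⟨b, (F_mem_upperBounds_iff hS).1 hu⟩ h
  · exact le_rfl
  · exact Z_le_T

lemma exists_isLUB (S : Set TV) : ∃ v, IsLUB S v := by
  by_cases hT : (T ⁻¹' S).Nonempty
  · obtain ⟨m, hm⟩ := exists_isLeast_of_nonempty hT
    exact ⟨_, isLUB_T_of_isLeast hm⟩
  by_cases hZ : Z ∈ S
  · exact ⟨_, isLUB_Z_of_mem hZ fun a ha => hT ⟨a, ha⟩⟩
  have hS : S ⊆ range F := fun v hv => by
    rcases TV.cases v with ⟨b, rfl⟩ | rfl | ⟨b, rfl⟩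
    · exact ⟨b, rfl⟩
    · exact absurd hv hZ
    · exact absurd ⟨b, hv⟩ hT
  by_cases hB : BddAbove (F ⁻¹' S)
  · obtain ⟨m, hm⟩ := exists_isLeast_of_nonempty hB
    exact ⟨_, isLUB_F_of_isLUB hS hm⟩
  · exact ⟨_, isLUB_Z_of_not_bddAbove hS hB⟩

end TV

lemma isLUB_lub (S : Set TV) : IsLUB S (lub S) := by
  have hS := TV.exists_isLUB S
  rw [lub, dif_pos hS]
  exact hS.choose_spec

section Levels

variable {I J : Interp} {α : Ord1}

def DiffersAt (I J : Interp) (α : Ord1) : Prop :=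
  level I (TV.T α) ≠ level J (TV.T α) ∨ level I (TV.F α) ≠ level J (TV.F α)

lemma level_ne_of_apply_eq {p : ℕ} {v : TV} (hI : I p = v) (hJ : J p ≠ v) :
    level I v ≠ level J v := fun h => hJ (show p ∈ level J v from h ▸ hI)

lemma exists_differsAt_of_apply_ne {p : ℕ} (hne : I p ≠ J p) (hZ : I p ≠ TV.Z) :
    ∃ α, DiffersAt I J α := by
  rcases TV.cases (I p) with ⟨a, ha⟩ | hIZ | ⟨a, ha⟩
  · exact ⟨a, Or.inr (level_ne_of_apply_eq ha (ha ▸ hne.symm))⟩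
  · exact absurd hIZ hZ
  · exact ⟨a, Or.inl (level_ne_of_apply_eq ha (ha ▸ hne.symm))⟩

lemma exists_differsAt_of_ne (h : I ≠ J) : ∃ α, DiffersAt I J α := by
  obtain ⟨p, hp⟩ := Function.ne_iff.1 h
  by_cases hZ : I p = TV.Z
  · obtain ⟨α, hα⟩ := exists_differsAt_of_apply_ne hp.symm (hZ ▸ hp.symm)
    exact ⟨α, hα.imp Ne.symm Ne.symm⟩
  · exact exists_differsAt_of_apply_ne hp hZ

lemma level_T_subset_of_le (hle : ∀ p, I p ≤ J p)
    (hα : ∀ β < α, level I (TV.T β) = level J (TV.T β)) :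
    level I (TV.T α) ⊆ level J (TV.T α) := by
  intro p (hp : I p = TV.T α)
  obtain ⟨b, hba, hJ⟩ := TV.eq_T_of_T_le (hp ▸ hle p)
  obtain rfl | hlt := eq_or_lt_of_le hba
  · exact hJ
  · have hI : p ∈ level I (TV.T b) := by rw [hα b hlt]; exact hJ
    exact absurd (TV.T_injective (hI.symm.trans hp)) hlt.ne

lemma level_F_subset_of_le (hle : ∀ p, I p ≤ J p)
    (hα : ∀ β < α, level I (TV.F β) = level J (TV.F β)) :
    level J (TV.F α) ⊆ level I (TV.F α) := by
  intro p (hp : J p = TV.F α)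
  obtain ⟨b, hba, hI⟩ := TV.eq_F_of_le_F (hp ▸ hle p)
  obtain rfl | hlt := eq_or_lt_of_le hba
  · exact hI
  · have hJ : p ∈ level J (TV.F b) := by rw [← hα b hlt]; exact hI
    exact absurd (TV.F_injective (hJ.symm.trans hp)) hlt.ne

theorem sqleInf_of_le (hle : ∀ p, I p ≤ J p) : sqleInf I J := by
  by_cases hIJ : I = J
  · exact Or.inl hIJ
  obtain ⟨α, hα, hmin⟩ := exists_isLeast_of_nonempty (exists_differsAt_of_ne hIJ)
  have hagree : ∀ β < α,
      level I (TV.T β) = level J (TV.T β) ∧ level I (TV.F β) = level J (TV.F β) :=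
    fun β hβ => by
      have hβ : ¬DiffersAt I J β := fun h => (hmin h).not_gt hβ
      simpa only [DiffersAt, not_or, not_not] using hβ
  have hT := level_T_subset_of_le hle fun β hβ => (hagree β hβ).1
  have hF := level_F_subset_of_le hle fun β hβ => (hagree β hβ).2
  refine Or.inr ⟨α, fun β hβ γ hγ => hagree γ (hγ.trans_lt hβ), ?_⟩
  rcases hα with hne | hne
  · exact Or.inl ⟨hT.ssubset_of_ne hne, hF⟩
  · exact Or.inr ⟨hT, hF.ssubset_of_ne hne.symm⟩

end Levels

lemma TP_le_of_isModel {P : Program} {N : Interp} (h : isModel P N) (p : ℕ) :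
    TP P N p ≤ N p :=
  (isLUB_lub _).2 <| by
    rintro v ⟨c, hc, rfl, rfl⟩
    exact h c hc

/-- If `N` is a model of `P` then `T_P(N) ⊑_∞ N`. -/
theorem TP_sqleInf_of_model (P : Program) (N : Interp) (h : isModel P N) :
    sqleInf (TP P N) N :=
  sqleInf_of_le (TP_le_of_isModel h)

end IVS
end
end
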